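/- Let G = (V,E) be a finite simple undirected graph, L a finite linearly ordered set of labels, and F the synchronous LPA-Max update. Then for every initial labeling ℓ the stop criterion (c2) is eventually met: there exists t ≥ 2 such that F^t(ℓ) = F^{t-1}(ℓ) or F^t(ℓ) = F^{t-2}(ℓ); hence synchronous LPA-Max run with stop criterion (c2) always terminates. -/

import Mathlib

/-- The number of neighbors of `v` that carry label `l` under the labeling `ℓ`. -/
def nbrCount {V : Type*} [Fintype V] [DecidableEq V] {L : Type*} [DecidableEq L]
    (G : SimpleGraph V) [DecidableRel G.Adj] (ℓ : V → L) (v : V) (l : L) : ℕ :=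
  ((G.neighborFinset v).filter fun u => ℓ u = l).card

/-- `l` is a plurality label at `v` under `ℓ`. -/
def IsPlurality {V : Type*} [Fintype V] [DecidableEq V] {L : Type*} [DecidableEq L]
    (G : SimpleGraph V) [DecidableRel G.Adj] (ℓ : V → L) (v : V) (l : L) : Prop :=
  ∀ l', nbrCount G ℓ v l' ≤ nbrCount G ℓ v l

instance {V : Type*} [Fintype V] [DecidableEq V] {L : Type*} [DecidableEq L] [Fintype L]
    (G : SimpleGraph V) [DecidableRel G.Adj] (ℓ : V → L) (v : V) :
    DecidablePred (IsPlurality G ℓ v) := fun l =>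
  inferInstanceAs (Decidable (∀ l', nbrCount G ℓ v l' ≤ nbrCount G ℓ v l))

/-- The synchronous LPA-Max update: simultaneously for all vertices, `ℓ v` is replaced by
the maximum (in the linear order on `L`) among the plurality labels at `v` under `ℓ`. -/
def lpaMaxUpdate {V : Type*} [Fintype V] [DecidableEq V] {L : Type*} [Fintype L]
    [LinearOrder L] (G : SimpleGraph V) [DecidableRel G.Adj] (ℓ : V → L) : V → L :=
  fun v => ((Finset.univ.filter fun l => IsPlurality G ℓ v l).max).getD (ℓ v)

/-!
The potential `Φ ℓ = ∑ v, c_ℓ(v, (F ℓ) v)` counts the ordered edges `(v, u)` with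
`ℓ u = (F ℓ) v`. Reading the same edges from the other end gives
`Φ ℓ = ∑ v, c_{F ℓ}(v, ℓ v) ≤ ∑ v, c_{F ℓ}(v, (F² ℓ) v) = Φ (F ℓ)`, since `(F² ℓ) v` is a
plurality label at `v` under `F ℓ`. Taking finitely many values, `Φ` is eventually constant along
the run, and from then on `ℓ v` is itself a plurality label under `F ℓ`, so `ℓ ≤ F² ℓ` pointwise
because `F` picks the largest plurality label. The even-step labelings then increase in the
finite order `V → L`, hence become constant: the run ends in a fixed point or a 2-cycle.
-/

lemma Monotone.exists_forall_le_eq_of_finite_range {α : Type*} [PartialOrder α] {f : ℕ → α}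
    (hf : Monotone f) (hfin : (Set.range f).Finite) : ∃ N, ∀ n, N ≤ n → f n = f N := by
  obtain ⟨N, -, hN⟩ := Set.Finite.exists_maximalFor' f Set.univ (Set.image_univ ▸ hfin)
    Set.univ_nonempty
  exact ⟨N, fun n hn => le_antisymm (hN trivial (hf hn)) (hf hn)⟩

section Agreement

variable {V : Type*} [Fintype V] [DecidableEq V] {L : Type*} [DecidableEq L]
variable (G : SimpleGraph V) [DecidableRel G.Adj]

def nbrAgreement (ℓ ℓ' : V → L) : ℕ :=
  ∑ v, nbrCount G ℓ v (ℓ' v)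

lemma nbrCount_eq_sum (ℓ : V → L) (v : V) (l : L) :
    nbrCount G ℓ v l = ∑ u, if G.Adj v u ∧ ℓ u = l then 1 else 0 := by
  rw [nbrCount, SimpleGraph.neighborFinset_eq_filter, Finset.filter_filter, Finset.card_filter]

lemma nbrAgreement_comm (ℓ ℓ' : V → L) : nbrAgreement G ℓ ℓ' = nbrAgreement G ℓ' ℓ := by
  simp only [nbrAgreement, nbrCount_eq_sum]
  rw [Finset.sum_comm]
  simp only [G.adj_comm, eq_comm]

lemma exists_isPlurality [Fintype L] (ℓ : V → L) (v : V) : ∃ l, IsPlurality G ℓ v l := by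
  obtain ⟨l, -, hl⟩ := Finset.univ.exists_max_image (nbrCount G ℓ v) ⟨ℓ v, Finset.mem_univ _⟩
  exact ⟨l, fun l' => hl l' (Finset.mem_univ _)⟩

variable {G}

lemma nbrAgreement_le_of_isPlurality {ℓ ℓ' ℓ'' : V → L} (h : ∀ v, IsPlurality G ℓ v (ℓ'' v)) :
    nbrAgreement G ℓ ℓ' ≤ nbrAgreement G ℓ ℓ'' :=
  Finset.sum_le_sum fun v _ => h v (ℓ' v)

lemma isPlurality_of_nbrAgreement_eq {ℓ ℓ' ℓ'' : V → L} (h : ∀ v, IsPlurality G ℓ v (ℓ'' v))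
    (heq : nbrAgreement G ℓ ℓ' = nbrAgreement G ℓ ℓ'') (v : V) : IsPlurality G ℓ v (ℓ' v) := by
  have hv := (Finset.sum_eq_sum_iff_of_le fun v _ => h v (ℓ' v)).1 heq v (Finset.mem_univ v)
  exact fun l => hv ▸ h v l

end Agreement

section LpaMax

variable {V : Type*} [Fintype V] [DecidableEq V] {L : Type*} [Fintype L] [LinearOrder L]
variable (G : SimpleGraph V) [DecidableRel G.Adj]

lemma lpaMaxUpdate_eq_max' (ℓ : V → L) (v : V)
    (hne : (Finset.univ.filter fun l => IsPlurality G ℓ v l).Nonempty) :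
    lpaMaxUpdate G ℓ v = (Finset.univ.filter fun l => IsPlurality G ℓ v l).max' hne := by
  rw [lpaMaxUpdate, ← Finset.coe_max' hne]
  rfl

lemma isPlurality_lpaMaxUpdate (ℓ : V → L) (v : V) : IsPlurality G ℓ v (lpaMaxUpdate G ℓ v) := by
  obtain ⟨l, hl⟩ := exists_isPlurality G ℓ v
  have hne : (Finset.univ.filter fun l => IsPlurality G ℓ v l).Nonempty := ⟨l, by simpa using hl⟩
  rw [lpaMaxUpdate_eq_max' G ℓ v hne]
  exact (Finset.mem_filter.1 (Finset.max'_mem _ hne)).2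

variable {G}

lemma le_lpaMaxUpdate {ℓ : V → L} {v : V} {l : L} (h : IsPlurality G ℓ v l) :
    l ≤ lpaMaxUpdate G ℓ v := by
  have hl : l ∈ Finset.univ.filter fun l => IsPlurality G ℓ v l := by simpa using h
  rw [lpaMaxUpdate_eq_max' G ℓ v ⟨l, hl⟩]
  exact Finset.le_max' _ l hl

variable (G)

def lpaPotential (ℓ : V → L) : ℕ :=
  nbrAgreement G ℓ (lpaMaxUpdate G ℓ)

lemma lpaPotential_le_lpaPotential_lpaMaxUpdate (ℓ : V → L) :
    lpaPotential G ℓ ≤ lpaPotential G (lpaMaxUpdate G ℓ) := by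
  rw [lpaPotential, nbrAgreement_comm]
  exact nbrAgreement_le_of_isPlurality (isPlurality_lpaMaxUpdate G _)

variable {G}

lemma le_lpaMaxUpdate_lpaMaxUpdate_of_lpaPotential_eq {ℓ : V → L}
    (h : lpaPotential G ℓ = lpaPotential G (lpaMaxUpdate G ℓ)) :
    ℓ ≤ lpaMaxUpdate G (lpaMaxUpdate G ℓ) := fun v => by
  rw [lpaPotential, nbrAgreement_comm] at h
  exact le_lpaMaxUpdate (isPlurality_of_nbrAgreement_eq (isPlurality_lpaMaxUpdate G _) h v)

end LpaMax

/-- Synchronous LPA-Max run with stop criterion (c2) always terminates: for every initial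
labeling there is a step `t ≥ 2` at which the current labeling equals the labeling of the
previous step or the labeling of two steps before. -/
theorem lpaMax_stop_criterion_c2
    {V : Type*} [Fintype V] [DecidableEq V] {L : Type*} [Fintype L] [LinearOrder L]
    (G : SimpleGraph V) [DecidableRel G.Adj] (ℓ : V → L) :
    ∃ t : ℕ, 2 ≤ t ∧
      ((lpaMaxUpdate G)^[t] ℓ = (lpaMaxUpdate G)^[t - 1] ℓ ∨
        (lpaMaxUpdate G)^[t] ℓ = (lpaMaxUpdate G)^[t - 2] ℓ) := by
  set F : (V → L) → V → L := lpaMaxUpdate G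
  have hpot : Monotone fun t => lpaPotential G (F^[t] ℓ) := monotone_nat_of_le_succ fun t => by
    simpa only [Function.iterate_succ_apply'] using
      lpaPotential_le_lpaPotential_lpaMaxUpdate G (F^[t] ℓ)
  obtain ⟨T, hT⟩ := hpot.exists_forall_le_eq_of_finite_range
    ((Set.finite_range (lpaPotential G)).subset
      (Set.range_subset_iff.2 fun _ => Set.mem_range_self _))
  have hstep : ∀ k, F^[T + 2 * k] ℓ ≤ F^[T + 2 * (k + 1)] ℓ := fun k => by
    have hfix := (hT (T + 2 * k) (by omega)).trans (hT (T + 2 * k + 1) (by omega)).symm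
    rw [Function.iterate_succ_apply'] at hfix
    rw [show T + 2 * (k + 1) = T + 2 * k + 1 + 1 by ring, Function.iterate_succ_apply',
      Function.iterate_succ_apply']
    exact le_lpaMaxUpdate_lpaMaxUpdate_of_lpaPotential_eq hfix
  obtain ⟨K, hK⟩ := (monotone_nat_of_le_succ hstep).exists_forall_le_eq_of_finite_range
    (Set.toFinite _)
  refine ⟨T + 2 * K + 2, by omega, Or.inr ?_⟩
  rw [Nat.add_sub_cancel]
  exact hK (K + 1) (by omega)
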